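/- For positive definite matrices A and B, tr((A^{1/2} B A^{1/2})^{1/2}) ≥ tr(A^{1/2} B^{1/2}), with equality when A and B commute. -/

import Mathlib

open Matrix BigOperators
open scoped Classical

/-- Frobenius norm of a real matrix. -/
noncomputable def frobNorm {d : ℕ} (M : Matrix (Fin d) (Fin d) ℝ) : ℝ :=
  Real.sqrt (∑ i, ∑ j, (M i j) ^ 2)

/-- Euclidean norm of the half-vectorization (upper-triangular entries incl. diagonal). -/
noncomputable def vechNorm {d : ℕ} (M : Matrix (Fin d) (Fin d) ℝ) : ℝ :=
  Real.sqrt (∑ i, ∑ j, if i ≤ j then (M i j) ^ 2 else 0)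

/-- The old Mathlib `Matrix.PosSemidef.sqrt` (removed upstream), restated with its old definition. -/
noncomputable def Matrix.PosSemidef.sqrt {d : ℕ} {M : Matrix (Fin d) (Fin d) ℝ} (hA : M.PosSemidef) :
    Matrix (Fin d) (Fin d) ℝ :=
  (hA.1.eigenvectorUnitary : Matrix (Fin d) (Fin d) ℝ) * diagonal (Real.sqrt ∘ hA.1.eigenvalues) *
    (star hA.1.eigenvectorUnitary : Matrix (Fin d) (Fin d) ℝ)

/-- The positive-semidefinite matrix square root (0 if the input is not PSD). -/
noncomputable def sqrtm {d : ℕ} (M : Matrix (Fin d) (Fin d) ℝ) : Matrix (Fin d) (Fin d) ℝ :=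
  if h : M.PosSemidef then h.sqrt else 0

/-- Bures–Wasserstein distance between SPD matrices. -/
noncomputable def bwDist {d : ℕ} (A B : Matrix (Fin d) (Fin d) ℝ) : ℝ :=
  Real.sqrt (A.trace + B.trace - 2 * (sqrtm (sqrtm A * B * sqrtm A)).trace)

/-- Trace norm (nuclear norm) of a real matrix. -/
noncomputable def traceNorm {d : ℕ} (M : Matrix (Fin d) (Fin d) ℝ) : ℝ :=
  (sqrtm (Mᵀ * M)).trace

namespace Matrix.PosSemidef
open scoped MatrixOrder

lemma sqrt_eq_cfcSqrt {d : ℕ} {M : Matrix (Fin d) (Fin d) ℝ} (hA : M.PosSemidef) :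
    hA.sqrt = CFC.sqrt M := by
  rw [CFC.sqrt_eq_real_sqrt M hA.nonneg, cfcₙ_eq_cfc, hA.1.cfc_eq, Matrix.IsHermitian.cfc,
    Matrix.PosSemidef.sqrt, Unitary.conjStarAlgAut_apply]
  rfl

lemma posSemidef_sqrt {d : ℕ} {M : Matrix (Fin d) (Fin d) ℝ} (hA : M.PosSemidef) :
    hA.sqrt.PosSemidef := by
  rw [sqrt_eq_cfcSqrt]; exact (CFC.sqrt_nonneg M).posSemidef

lemma sqrt_mul_self {d : ℕ} {M : Matrix (Fin d) (Fin d) ℝ} (hA : M.PosSemidef) :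
    hA.sqrt * hA.sqrt = M := by
  rw [sqrt_eq_cfcSqrt]; exact CFC.sqrt_mul_sqrt_self M hA.nonneg

lemma eq_sqrt_of_sq_eq {d : ℕ} {M N : Matrix (Fin d) (Fin d) ℝ} (hA : M.PosSemidef)
    (hB : N.PosSemidef) (h : M ^ 2 = N) : M = hB.sqrt := by
  rw [sqrt_eq_cfcSqrt, ← h, CFC.sqrt_sq M hA.nonneg]

end Matrix.PosSemidef

private lemma diag_comm_fun {n : Type*} [Fintype n] [DecidableEq n]
    {M : Matrix n n ℝ} {v : n → ℝ} (g : ℝ → ℝ)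
    (h : diagonal v * M = M * diagonal v) :
    diagonal (g ∘ v) * M = M * diagonal (g ∘ v) := by
  ext i j
  have h' : v i * M i j = M i j * v j := by
    have := congrFun (congrFun h i) j
    simpa [Matrix.diagonal_mul, Matrix.mul_diagonal] using this
  simp only [Matrix.diagonal_mul, Matrix.mul_diagonal, Function.comp_apply]
  rcases eq_or_ne (v i) (v j) with he | hne
  · rw [he, mul_comm]
  · have hM : M i j = 0 := by
      have h0 : (v i - v j) * M i j = 0 := by linear_combination h'
      rcases mul_eq_zero.mp h0 with h1 | h1
      · exact absurd (sub_eq_zero.mp h1) hne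
      · exact h1
    simp [hM]

private lemma sqrt_comm {d : ℕ} {A B : Matrix (Fin d) (Fin d) ℝ} (hA : A.PosSemidef)
    (h : A * B = B * A) : hA.sqrt * B = B * hA.sqrt := by
  obtain ⟨V, v, hV2, hV1, hspec, hsq⟩ :
      ∃ (V : Matrix (Fin d) (Fin d) ℝ) (v : Fin d → ℝ),
        V * star V = 1 ∧ star V * V = 1 ∧ A = V * diagonal v * star V ∧
        hA.sqrt = V * diagonal (Real.sqrt ∘ v) * star V := by
    refine ⟨hA.1.eigenvectorUnitary, hA.1.eigenvalues, ?_, ?_, ?_, ?_⟩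
    · exact (Matrix.mem_unitaryGroup_iff).mp hA.1.eigenvectorUnitary.2
    · exact (Matrix.mem_unitaryGroup_iff').mp hA.1.eigenvectorUnitary.2
    · simpa using hA.1.spectral_theorem
    · rw [Matrix.PosSemidef.sqrt]
  have c1 : ∀ X : Matrix (Fin d) (Fin d) ℝ, V * (star V * X) = X := fun X => by
    rw [← mul_assoc, hV2, one_mul]
  have c2 : ∀ X : Matrix (Fin d) (Fin d) ℝ, star V * (V * X) = X := fun X => by
    rw [← mul_assoc, hV1, one_mul]
  have hDM : diagonal v * (star V * B * V) = (star V * B * V) * diagonal v := by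
    have h1 : star V * A * V = diagonal v := by
      rw [hspec]
      simp only [mul_assoc]
      rw [c2, hV1, mul_one]
    rw [← h1]
    simp only [mul_assoc]
    rw [c1, c1]
    congr 1
    rw [← mul_assoc, ← mul_assoc, h]
  have hSM := diag_comm_fun Real.sqrt hDM
  have e1 : hA.sqrt * B = V * (diagonal (Real.sqrt ∘ v) * (star V * B * V)) * star V := by
    rw [hsq]
    simp only [mul_assoc, hV2, mul_one]
  have e2 : B * hA.sqrt = V * ((star V * B * V) * diagonal (Real.sqrt ∘ v)) * star V := by
    rw [hsq]
    simp only [← mul_assoc, hV2, one_mul]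
  rw [e1, e2, hSM]

private lemma le_of_sq_le_mul {x a : ℝ} (h : x ^ 2 ≤ a * a) (ha : 0 ≤ a) : x ≤ a := by
  nlinarith


set_option maxHeartbeats 1600000 in
/-- tr((A^{1/2} B A^{1/2})^{1/2}) ≥ tr(A^{1/2} B^{1/2}) for SPD A, B,
with equality when A and B commute. -/
theorem trace_sqrt_middle_ge {d : ℕ} (A B : Matrix (Fin d) (Fin d) ℝ)
    (hA : A.PosDef) (hB : B.PosDef) :
    (sqrtm A * sqrtm B).trace ≤ (sqrtm (sqrtm A * B * sqrtm A)).trace ∧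
    (A * B = B * A → (sqrtm (sqrtm A * B * sqrtm A)).trace = (sqrtm A * sqrtm B).trace) := by
  have hA' := hA.posSemidef
  have hB' := hB.posSemidef
  have hsqA : sqrtm A = hA'.sqrt := dif_pos hA'
  have hsqB : sqrtm B = hB'.sqrt := dif_pos hB'
  set sA := hA'.sqrt with hsAdef
  set sB := hB'.sqrt with hsBdef
  have hsA : sA * sA = A := hA'.sqrt_mul_self
  have hsB : sB * sB = B := hB'.sqrt_mul_self
  have hsAH : sAᴴ = sA := (hA'.posSemidef_sqrt).1
  have hsBH : sBᴴ = sB := (hB'.posSemidef_sqrt).1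
  set Y := sA * sB with hYdef
  have hYYt : Y * Yᴴ = sA * B * sA := by
    rw [hYdef, conjTranspose_mul, hsAH, hsBH]
    simp only [mul_assoc]
    rw [← mul_assoc sB sB sA, hsB]
  have hMpsd : (sA * B * sA).PosSemidef := by
    have := hB'.mul_mul_conjTranspose_same sA
    rwa [hsAH] at this
  have hsqM : sqrtm (sA * B * sA) = hMpsd.sqrt := dif_pos hMpsd
  have hP2 : (Yᴴ * Y).PosSemidef := posSemidef_conjTranspose_mul_self Y
  set P := hP2.sqrt with hPdef
  have hP : P.PosSemidef := hP2.posSemidef_sqrt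
  have hPH : Pᴴ = P := hP.1
  have hPP : P * P = Yᴴ * Y := hP2.sqrt_mul_self
  -- determinants
  have hdA : sA.det ≠ 0 := by
    have h1 : sA.det * sA.det = A.det := by rw [← Matrix.det_mul, hsA]
    intro h0; rw [h0, zero_mul] at h1; exact hA.det_pos.ne' h1.symm
  have hdB : sB.det ≠ 0 := by
    have h1 : sB.det * sB.det = B.det := by rw [← Matrix.det_mul, hsB]
    intro h0; rw [h0, zero_mul] at h1; exact hB.det_pos.ne' h1.symm
  have hdY : Y.det ≠ 0 := by rw [hYdef, Matrix.det_mul]; exact mul_ne_zero hdA hdB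
  have hdP : IsUnit P.det := by
    have h1 : P.det * P.det = Y.det * Y.det := by
      have := congrArg Matrix.det hPP
      rwa [Matrix.det_mul, Matrix.det_mul, Matrix.det_conjTranspose, star_trivial] at this
    refine isUnit_iff_ne_zero.mpr fun h0 => ?_
    rw [h0, zero_mul] at h1
    exact (mul_ne_zero hdY hdY) h1.symm
  have hPinv : P * P⁻¹ = 1 := Matrix.mul_nonsing_inv P hdP
  have hPinv' : P⁻¹ * P = 1 := Matrix.nonsing_inv_mul P hdP
  set U := Y * P⁻¹ with hUdef
  have hUt : Uᴴ = P⁻¹ * Yᴴ := by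
    rw [hUdef, conjTranspose_mul, Matrix.conjTranspose_nonsing_inv, hPH]
  have hUU : Uᴴ * U = 1 := by
    rw [hUt, hUdef]
    simp only [mul_assoc]
    rw [← mul_assoc Yᴴ Y P⁻¹, ← hPP]
    simp only [mul_assoc]
    rw [hPinv, mul_one, hPinv']
  have hUUt : U * Uᴴ = 1 := mul_eq_one_comm.mp hUU
  have hUP : U * P = Y := by rw [hUdef, mul_assoc, hPinv', mul_one]
  have hPUt : P * Uᴴ = Yᴴ := by rw [hUt, ← mul_assoc, hPinv, one_mul]
  have hS'psd : (U * P * Uᴴ).PosSemidef := hP.mul_mul_conjTranspose_same U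
  have cU : ∀ X : Matrix (Fin d) (Fin d) ℝ, Uᴴ * (U * X) = X := fun X => by
    rw [← mul_assoc, hUU, one_mul]
  have hS'sq : (U * P * Uᴴ) ^ 2 = sA * B * sA := by
    rw [pow_two, ← hYYt]
    simp only [mul_assoc]
    rw [cU, hPUt, ← mul_assoc, hUP]
  have hsqrtM : U * P * Uᴴ = hMpsd.sqrt := hS'psd.eq_sqrt_of_sq_eq hMpsd hS'sq
  have htr : (hMpsd.sqrt).trace = P.trace := by
    rw [← hsqrtM, Matrix.trace_mul_cycle, hUU, one_mul]
  -- square root of P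
  set Q := hP.sqrt with hQdef
  have hQ : Q.PosSemidef := hP.posSemidef_sqrt
  have hQH : Qᴴ = Q := hQ.1
  have hQQ : Q * Q = P := hP.sqrt_mul_self
  have hQsymm : ∀ i j, Q j i = Q i j := fun i j => by
    have := congrFun (congrFun hQH i) j
    simpa [Matrix.conjTranspose_apply] using this
  have htrsq : ∀ M : Matrix (Fin d) (Fin d) ℝ,
      (M * Mᴴ).trace = ∑ p : Fin d × Fin d, (M p.1 p.2) ^ 2 := fun M => by
    rw [Fintype.sum_prod_type]
    simp [Matrix.trace, Matrix.mul_apply, Matrix.conjTranspose_apply, Matrix.diag, sq]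
  have hf2 : ∑ p : Fin d × Fin d, ((Q * U) p.1 p.2) ^ 2 = P.trace := by
    rw [← htrsq]
    have : (Q * U) * (Q * U)ᴴ = P := by
      rw [conjTranspose_mul, hQH]
      calc Q * U * (Uᴴ * Q) = Q * (U * Uᴴ) * Q := by simp only [mul_assoc]
        _ = P := by rw [hUUt, mul_one, hQQ]
    rw [this]
  have hg2 : ∑ p : Fin d × Fin d, (Q p.1 p.2) ^ 2 = P.trace := by
    rw [← htrsq, hQH, hQQ]
  have hYtr : Y.trace = ∑ p : Fin d × Fin d, (Q * U) p.1 p.2 * Q p.1 p.2 := by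
    rw [← hUP, ← hQQ, ← mul_assoc, Matrix.trace_mul_comm, ← mul_assoc]
    rw [Fintype.sum_prod_type]
    simp only [Matrix.trace, Matrix.diag, Matrix.mul_apply]
    exact Finset.sum_congr rfl fun i _ => Finset.sum_congr rfl fun j _ => by rw [hQsymm i j]
  have hcs := Finset.sum_mul_sq_le_sq_mul_sq Finset.univ
    (fun p : Fin d × Fin d => (Q * U) p.1 p.2) (fun p : Fin d × Fin d => Q p.1 p.2)
  rw [hf2, hg2] at hcs
  have hg2nonneg : (0:ℝ) ≤ P.trace := by
    rw [← hg2]; exact Finset.sum_nonneg fun p _ => sq_nonneg _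
  have hineq : Y.trace ≤ P.trace := by
    rw [hYtr]
    exact le_of_sq_le_mul hcs hg2nonneg
  rw [hsqA, hsqB, hsqM]
  constructor
  · rw [htr]; exact hineq
  · intro hcomm
    have h1 : sA * B = B * sA := sqrt_comm hA' hcomm
    have h2 : sB * sA = sA * sB := sqrt_comm hB' h1.symm
    set r := (hB'.posSemidef_sqrt).sqrt with hrdef
    have hr : r * r = sB := (hB'.posSemidef_sqrt).sqrt_mul_self
    have hrH : rᴴ = r := ((hB'.posSemidef_sqrt).posSemidef_sqrt).1
    have h3 : r * sA = sA * r := sqrt_comm hB'.posSemidef_sqrt h2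
    have hYform : r * sA * rᴴ = Y := by
      rw [hrH, h3, mul_assoc, hr]
    have hYpsd : Y.PosSemidef := hYform ▸ (hA'.posSemidef_sqrt).mul_mul_conjTranspose_same r
    have hYsq : Y ^ 2 = sA * B * sA := by
      rw [pow_two, hYdef]
      calc sA * sB * (sA * sB) = sA * (sB * sA) * sB := by simp only [mul_assoc]
        _ = sA * sA * (sB * sB) := by rw [h2]; simp only [mul_assoc]
        _ = A * B := by rw [hsA, hsB]
        _ = B * (sA * sA) := by rw [hcomm, hsA]
        _ = sA * B * sA := by rw [← mul_assoc, ← h1, mul_assoc]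
    rw [← hYpsd.eq_sqrt_of_sq_eq hMpsd hYsq]
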